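/- Let C be an exact abelian subcategory of mod Λ and C a progenerator of C. Then C is ab-projective, and C = stat C = ab C: the exact abelian subcategory generated by C equals C, and the C-static modules are exactly the objects of C. -/

import Mathlib

open TensorProduct LinearMap

section StaticDefs
variable (R : Type) [Ring R] (M : Type) [AddCommGroup M] [Module R M]
variable (N : Type) [AddCommGroup N] [Module R N]

/-- The evaluation map `M ⊗[ℤ] Hom_R(M,N) → N`. -/
noncomputable def evalTensor : (M ⊗[ℤ] (M →ₗ[R] N)) →ₗ[ℤ] N :=
  TensorProduct.lift (LinearMap.mk₂ ℤ (fun m f => f m)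
    (fun m m' f => by simp) (fun z m f => by simp)
    (fun m f g => rfl) (fun z m f => rfl))

/-- The subgroup of relations defining `M ⊗_{End(M)ᵒᵖ} Hom(M,N)` as a quotient
of `M ⊗[ℤ] Hom(M,N)`. -/
noncomputable def staticRel : AddSubgroup (M ⊗[ℤ] (M →ₗ[R] N)) :=
  AddSubgroup.closure {x | ∃ (e : M →ₗ[R] M) (m : M) (f : M →ₗ[R] N),
    x = e m ⊗ₜ[ℤ] f - m ⊗ₜ[ℤ] (f ∘ₗ e)}

/-- `N` is `M`-static: the canonical map `μ_N : M ⊗_{End(M)ᵒᵖ} Hom(M,N) → N`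
is an isomorphism; equivalently (since the relations are contained in the kernel of
evaluation), the evaluation map is surjective and its kernel consists of relations. -/
def IsStatic : Prop :=
  Function.Surjective (evalTensor R M N) ∧
    ∀ x, evalTensor R M N x = 0 → x ∈ staticRel R M N

/-- `M'` belongs to `add M`: it is a direct summand of a finite direct sum of copies of `M`. -/
def InAdd (M' : Type) [AddCommGroup M'] [Module R M'] : Prop :=
  ∃ (n : ℕ) (i : M' →ₗ[R] (Fin n → M)) (p : (Fin n → M) →ₗ[R] M'),
    p ∘ₗ i = LinearMap.id

/-- `N` is generated by `M`: an epimorphic image of a finite direct sum of copies of `M`. -/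
def GeneratedBy : Prop :=
  ∃ (n : ℕ) (g : (Fin n → M) →ₗ[R] N), Function.Surjective g

end StaticDefs


open CategoryTheory Limits

instance (priority := 100) abelian_hasFiniteBiproducts {C : Type*} [CategoryTheory.Category C] [CategoryTheory.Abelian C] :
    CategoryTheory.Limits.HasFiniteBiproducts C :=
  CategoryTheory.Limits.HasFiniteBiproducts.of_hasFiniteProducts

section CatDefs
variable {C : Type*} [Category C] [Abelian C]

/-- `X` belongs to `add M`: it is a retract of a finite direct sum of copies of `M`. -/
def CatInAdd (M X : C) : Prop :=
  ∃ (n : ℕ) (s : X ⟶ ⨁ (fun _ : Fin n => M)) (r : (⨁ (fun _ : Fin n => M)) ⟶ X),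
    s ≫ r = 𝟙 X

/-- A (strictly full) exact abelian subcategory of an abelian category:
a class of objects closed under isomorphisms, containing the zero objects and
closed under kernels, cokernels and finite direct sums. -/
structure IsExactAbelianSub (P : C → Prop) : Prop where
  iso : ∀ {X Y : C}, (X ≅ Y) → P X → P Y
  zero : ∀ Z : C, IsZero Z → P Z
  ker : ∀ {X Y : C} (f : X ⟶ Y), P X → P Y → P (kernel f)
  coker : ∀ {X Y : C} (f : X ⟶ Y), P X → P Y → P (cokernel f)
  sum : ∀ {X Y : C}, P X → P Y → P (X ⊞ Y)

/-- `ab M`: the smallest exact abelian subcategory containing `M`. -/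
def abSub (M : C) (X : C) : Prop :=
  ∀ P : C → Prop, IsExactAbelianSub P → P M → P X

/-- `G` is a projective object relative to the subcategory `P`. -/
def ProjIn (P : C → Prop) (G : C) : Prop :=
  P G ∧ ∀ (X Y : C), P X → P Y → ∀ (e : X ⟶ Y), Epi e →
    ∀ f : G ⟶ Y, ∃ g : G ⟶ X, g ≫ e = f

/-- `M` is ab-projective: projective as an object of `ab M`. -/
def AbProjective (M : C) : Prop := ProjIn (abSub M) M

/-- relative simple objects of the subcategory `P`. -/
def RelSimple (P : C → Prop) (X : C) : Prop :=
  P X ∧ ¬ IsZero X ∧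
    ∀ (Y : C) (i : Y ⟶ X), Mono i → P Y → IsZero Y ∨ IsIso i

/-- `X` has a filtration of length `n` inside the subcategory `P` whose
consecutive quotients satisfy `Q`. -/
def HasFiltration (P Q : C → Prop) (X : C) (n : ℕ) : Prop :=
  ∃ (F : Fin (n+1) → C) (g : ∀ i : Fin n, F i.castSucc ⟶ F i.succ),
    IsZero (F 0) ∧ Nonempty (F (Fin.last n) ≅ X) ∧
    ∀ i : Fin n, Mono (g i) ∧ P (F i.castSucc) ∧ P (F i.succ) ∧ Q (cokernel (g i))

/-- relative semisimple objects: finite direct sums of relative simples. -/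
def RelSemisimple (P : C → Prop) (X : C) : Prop :=
  ∃ (m : ℕ) (s : Fin m → C), (∀ i, RelSimple P (s i)) ∧ Nonempty (X ≅ ⨁ s)

end CatDefs

/-!
A progenerator `G` gives every object `X` of `P` a presentation `Gᵐ → Gⁿ → X → 0` that stays
exact under `Hom(G, -)`. Such a presentation shows at once that `X` lies in every exact abelian
subcategory containing `G`, and that `X` is static, since `G ⊗_{End G} Hom(G, -)` is right exact
and is the identity on `Gⁿ`. Conversely, if `X` is static and finite length, `Hom(G, X)` is a
finitely presented module over the finite-dimensional algebra `End G`; tensoring a presentation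
of it with `G` presents `X ≅ G ⊗_{End G} Hom(G, X)` as a cokernel of a map `Gᵐ → Gⁿ`, so `X ∈ P`.
-/

section StaticRelations

variable {R : Type} [Ring R] {G : Type} [AddCommGroup G] [Module R G]
  {N N' : Type} [AddCommGroup N] [Module R N] [AddCommGroup N'] [Module R N']

@[simp]
lemma evalTensor_tmul (g : G) (f : G →ₗ[R] N) : evalTensor R G N (g ⊗ₜ[ℤ] f) = f g := rfl

lemma tmul_sub_tmul_comp_mem_staticRel (c : G →ₗ[R] G) (g : G) (f : G →ₗ[R] N) :
    c g ⊗ₜ[ℤ] f - g ⊗ₜ[ℤ] (f ∘ₗ c) ∈ staticRel R G N :=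
  AddSubgroup.subset_closure ⟨c, g, f, rfl⟩

lemma evalTensor_eq_zero_of_mem_staticRel {x : G ⊗[ℤ] (G →ₗ[R] N)}
    (hx : x ∈ staticRel R G N) : evalTensor R G N x = 0 := by
  suffices staticRel R G N ≤ (evalTensor R G N).toAddMonoidHom.ker from this hx
  refine (AddSubgroup.closure_le _).2 ?_
  rintro _ ⟨c, g, f, rfl⟩
  simp

lemma lTensor_mem_staticRel (T : (G →ₗ[R] N) →ₗ[ℤ] (G →ₗ[R] N'))
    (hT : ∀ f c, T (f ∘ₗ c) = T f ∘ₗ c) {x : G ⊗[ℤ] (G →ₗ[R] N)}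
    (hx : x ∈ staticRel R G N) : T.lTensor G x ∈ staticRel R G N' := by
  suffices staticRel R G N ≤ (staticRel R G N').comap (T.lTensor G).toAddMonoidHom from this hx
  refine (AddSubgroup.closure_le _).2 ?_
  rintro _ ⟨c, g, f, rfl⟩
  simpa [hT] using tmul_sub_tmul_comp_mem_staticRel c g (T f)

lemma evalTensor_lTensor_compRight (φ : N →ₗ[R] N') (x : G ⊗[ℤ] (G →ₗ[R] N)) :
    evalTensor R G N' ((LinearMap.compRight ℤ φ).lTensor G x) = φ (evalTensor R G N x) := by
  induction x using TensorProduct.induction_on with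
  | zero => simp
  | tmul g f => simp
  | add x y hx hy => simp [hx, hy]

variable {n : ℕ}

-- `piTmul id` inverts evaluation modulo `staticRel`, which is why `Gⁿ` is static.
noncomputable def piTmul (f : (Fin n → G) →ₗ[R] N) : (Fin n → G) →+ G ⊗[ℤ] (G →ₗ[R] N) where
  toFun v := ∑ i, v i ⊗ₜ[ℤ] (f ∘ₗ LinearMap.single R (fun _ => G) i)
  map_zero' := by simp
  map_add' v w := by simp [TensorProduct.add_tmul, Finset.sum_add_distrib]

lemma piTmul_apply (f : (Fin n → G) →ₗ[R] N) (v : Fin n → G) :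
    piTmul f v = ∑ i, v i ⊗ₜ[ℤ] (f ∘ₗ LinearMap.single R (fun _ => G) i) := rfl

@[simp]
lemma evalTensor_piTmul (f : (Fin n → G) →ₗ[R] N) (v : Fin n → G) :
    evalTensor R G N (piTmul f v) = f v := by
  simp only [piTmul_apply, map_sum, evalTensor_tmul, LinearMap.comp_apply, LinearMap.coe_single]
  rw [← map_sum, Finset.univ_sum_single]

lemma lTensor_piTmul (T : (G →ₗ[R] N) →ₗ[ℤ] (G →ₗ[R] N')) {f : (Fin n → G) →ₗ[R] N}
    {f' : (Fin n → G) →ₗ[R] N'}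
    (hT : ∀ i, T (f ∘ₗ LinearMap.single R (fun _ => G) i) = f' ∘ₗ LinearMap.single R (fun _ => G) i)
    (v : Fin n → G) : T.lTensor G (piTmul f v) = piTmul f' v := by
  simp [piTmul_apply, hT]

@[simp]
lemma piTmul_zero (v : Fin n → G) : piTmul (0 : (Fin n → G) →ₗ[R] N) v = 0 := by
  simp [piTmul_apply]

lemma comp_eq_sum_single_comp_proj (f : (Fin n → G) →ₗ[R] N) (a : G →ₗ[R] (Fin n → G)) :
    f ∘ₗ a = ∑ i, (f ∘ₗ LinearMap.single R (fun _ => G) i) ∘ₗ (LinearMap.proj i ∘ₗ a) := by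
  ext g
  simp [← map_sum, Finset.univ_sum_single]

lemma piTmul_apply_sub_tmul_mem_staticRel (f : (Fin n → G) →ₗ[R] N)
    (a : G →ₗ[R] (Fin n → G)) (g : G) :
    piTmul f (a g) - g ⊗ₜ[ℤ] (f ∘ₗ a) ∈ staticRel R G N := by
  rw [comp_eq_sum_single_comp_proj f a, TensorProduct.tmul_sum, piTmul_apply,
    ← Finset.sum_sub_distrib]
  exact sum_mem fun i _ => tmul_sub_tmul_comp_mem_staticRel _ g _

lemma piTmul_evalTensor_sub_mem_staticRel (y : G ⊗[ℤ] (G →ₗ[R] (Fin n → G))) :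
    piTmul LinearMap.id (evalTensor R G _ y) - y ∈ staticRel R G (Fin n → G) := by
  induction y using TensorProduct.induction_on with
  | zero => simp [zero_mem]
  | tmul g a => simpa using piTmul_apply_sub_tmul_mem_staticRel LinearMap.id a g
  | add x y hx hy => simpa [add_sub_add_comm] using add_mem hx hy

lemma piTmul_apply_sub_piTmul_comp_mem_staticRel {m : ℕ} (f : (Fin n → G) →ₗ[R] N)
    (u : (Fin m → G) →ₗ[R] (Fin n → G)) (w : Fin m → G) :
    piTmul f (u w) - piTmul (f ∘ₗ u) w ∈ staticRel R G N := by
  have hu : u w = ∑ j, (u ∘ₗ LinearMap.single R (fun _ => G) j) (w j) := by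
    simp [← map_sum, Finset.univ_sum_single]
  rw [hu, map_sum, piTmul_apply (f ∘ₗ u), ← Finset.sum_sub_distrib]
  exact sum_mem fun j _ => by
    simpa only [LinearMap.comp_assoc] using piTmul_apply_sub_tmul_mem_staticRel f _ (w j)

end StaticRelations

section StaticPresentations

variable {R : Type} [Ring R] {G : Type} [AddCommGroup G] [Module R G]
  {X : Type} [AddCommGroup X] [Module R X] {n m : ℕ}

lemma exists_comp_eq_of_ker_le {A B C : Type} [AddCommGroup A] [AddCommGroup B] [AddCommGroup C]
    [Module R A] [Module R B] [Module R C] {L : A →ₗ[R] B} (hL : Function.Surjective L)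
    (M : A →ₗ[R] C) (h : LinearMap.ker L ≤ LinearMap.ker M) : ∃ T : B →ₗ[R] C, T ∘ₗ L = M :=
  ⟨(LinearMap.ker L).liftQ M h ∘ₗ (L.quotKerEquivOfSurjective hL).symm.toLinearMap, by
    ext a
    simp [LinearMap.quotKerEquivOfSurjective_symm_apply]⟩

theorem isStatic_of_exact (π : (Fin n → G) →ₗ[R] X) (hπ : Function.Surjective π)
    (u : (Fin m → G) →ₗ[R] (Fin n → G)) (hu : LinearMap.range u = LinearMap.ker π)
    (hlift : ∀ f : G →ₗ[R] X, ∃ a, π ∘ₗ a = f) : IsStatic R G X := by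
  refine ⟨fun x => ?_, fun x hx => ?_⟩
  · obtain ⟨v, rfl⟩ := hπ x
    exact ⟨piTmul π v, evalTensor_piTmul π v⟩
  · let L := (LinearMap.compRight ℤ (M := G) π).lTensor G
    obtain ⟨y, rfl⟩ := LinearMap.lTensor_surjective G (g := LinearMap.compRight ℤ π) hlift x
    obtain ⟨w, hw⟩ : evalTensor R G _ y ∈ LinearMap.range u := by
      rw [hu, LinearMap.mem_ker, ← evalTensor_lTensor_compRight, hx]
    have hπu : π ∘ₗ u = 0 := LinearMap.range_le_ker_iff.1 hu.le
    have h1 : piTmul π (u w) - L y ∈ staticRel R G X := by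
      rw [hw, ← lTensor_piTmul (f := LinearMap.id) (LinearMap.compRight ℤ π) (fun _ => rfl),
        ← map_sub]
      exact lTensor_mem_staticRel _ (fun _ _ => rfl) (piTmul_evalTensor_sub_mem_staticRel y)
    have h2 := piTmul_apply_sub_piTmul_comp_mem_staticRel π u w
    rw [hπu, piTmul_zero, sub_zero] at h2
    simpa using sub_mem h2 h1

theorem exact_of_isStatic (hX : IsStatic R G X) (π : (Fin n → G) →ₗ[R] X)
    (u : (Fin m → G) →ₗ[R] (Fin n → G)) (hπu : π ∘ₗ u = 0)
    (hlift : ∀ f : G →ₗ[R] X, ∃ a, π ∘ₗ a = f)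
    (hker : ∀ a : G →ₗ[R] (Fin n → G), π ∘ₗ a = 0 → ∃ b, u ∘ₗ b = a) :
    Function.Surjective π ∧ LinearMap.range u = LinearMap.ker π := by
  have hL : Function.Surjective (LinearMap.compRight ℤ (M := G) π) := hlift
  refine ⟨fun x => ?_, le_antisymm (LinearMap.range_le_ker_iff.2 hπu) fun v hv => ?_⟩
  · obtain ⟨t, rfl⟩ := hX.1 x
    obtain ⟨y, rfl⟩ := LinearMap.lTensor_surjective G hL t
    exact ⟨_, (evalTensor_lTensor_compRight π y).symm⟩
  · let Q := LinearMap.range u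
    -- `T = Hom(G, mkQ) ∘ Hom(G, π)⁻¹` commutes with precomposition, so `G ⊗ T` followed by
    -- evaluation kills `staticRel` and splits `π` modulo `Q`.
    obtain ⟨T, hT⟩ := exists_comp_eq_of_ker_le hL (LinearMap.compRight ℤ Q.mkQ) fun a ha => by
      obtain ⟨b, rfl⟩ := hker a ha
      ext g
      simp [Q]
    have hTL (a : G →ₗ[R] (Fin n → G)) : T (π ∘ₗ a) = Q.mkQ ∘ₗ a := LinearMap.congr_fun hT a
    have hTnat (f : G →ₗ[R] X) (c : G →ₗ[R] G) : T (f ∘ₗ c) = T f ∘ₗ c := by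
      obtain ⟨a, rfl⟩ := hlift f
      rw [LinearMap.comp_assoc, hTL, hTL, LinearMap.comp_assoc]
    have hrel : piTmul π v ∈ staticRel R G X := hX.2 _ (by rwa [evalTensor_piTmul])
    have := evalTensor_eq_zero_of_mem_staticRel (lTensor_mem_staticRel T hTnat hrel)
    rwa [lTensor_piTmul T fun i => hTL _, evalTensor_piTmul, Submodule.mkQ_apply,
      Submodule.Quotient.mk_eq_zero] at this

end StaticPresentations

section FiniteDimensional

variable (k : Type) [Field k] {Λ : Type} [Ring Λ] [Algebra k Λ]
  {G : Type} [AddCommGroup G] [Module Λ G] [Module k G] [IsScalarTower k Λ G]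
  {X : Type} [AddCommGroup X] [Module Λ X] [Module k X] [IsScalarTower k Λ X]

lemma finiteDimensional_linearMap_of_isScalarTower [FiniteDimensional k G]
    [FiniteDimensional k X] : FiniteDimensional k (G →ₗ[Λ] X) :=
  Module.Finite.of_injective (LinearMap.restrictScalarsₗ k Λ G X k)
    (LinearMap.restrictScalars_injective k)

theorem exists_exact_of_finiteDimensional [FiniteDimensional k G] [FiniteDimensional k X] :
    ∃ (n m : ℕ) (π : (Fin n → G) →ₗ[Λ] X) (u : (Fin m → G) →ₗ[Λ] (Fin n → G)),
      π ∘ₗ u = 0 ∧ (∀ f : G →ₗ[Λ] X, ∃ a, π ∘ₗ a = f) ∧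
      ∀ a : G →ₗ[Λ] (Fin n → G), π ∘ₗ a = 0 → ∃ b, u ∘ₗ b = a := by
  have := finiteDimensional_linearMap_of_isScalarTower k (Λ := Λ) (G := G) (X := X)
  obtain ⟨n, h, hh⟩ := Module.Finite.exists_fin (R := k) (M := G →ₗ[Λ] X)
  let π := LinearMap.lsum Λ (fun _ : Fin n => G) ℕ h
  have hπ (i : Fin n) : π ∘ₗ LinearMap.single Λ (fun _ => G) i = h i :=
    LinearMap.ext fun g => LinearMap.lsum_piSingle Λ _ ℕ h i g
  let L := LinearMap.compRight k (M := G) π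
  have := finiteDimensional_linearMap_of_isScalarTower k (Λ := Λ) (G := G) (X := Fin n → G)
  obtain ⟨m, w, hw⟩ := Module.Finite.exists_fin (R := k) (M := LinearMap.ker L)
  let w' (j : Fin m) : G →ₗ[Λ] (Fin n → G) := w j
  let u := LinearMap.lsum Λ (fun _ : Fin m => G) ℕ w'
  have hu (j : Fin m) : u ∘ₗ LinearMap.single Λ (fun _ => G) j = w j :=
    LinearMap.ext fun g => LinearMap.lsum_piSingle Λ _ ℕ w' j g
  refine ⟨n, m, π, u, ?_, fun f => ?_, fun a ha => ?_⟩
  · refine LinearMap.pi_ext' fun j => ?_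
    rw [LinearMap.comp_assoc, hu, LinearMap.zero_comp]
    exact (w j).2
  · have hL : Submodule.span k (Set.range h) ≤ LinearMap.range L :=
      Submodule.span_le.2 <| Set.range_subset_iff.2 fun i => ⟨_, hπ i⟩
    exact hL (hh ▸ Submodule.mem_top)
  · have hK : Submodule.span k (Set.range w) ≤
        (LinearMap.range (LinearMap.compRight k (M := G) u)).comap (LinearMap.ker L).subtype :=
      Submodule.span_le.2 <| Set.range_subset_iff.2 fun j => ⟨_, hu j⟩
    exact hK (hw ▸ Submodule.mem_top (x := (⟨a, ha⟩ : LinearMap.ker L)))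

end FiniteDimensional

theorem exists_exact_of_isStatic (k : Type) [Field k] {Λ : Type} [Ring Λ] [Algebra k Λ]
    [FiniteDimensional k Λ] {G X : Type} [AddCommGroup G] [Module Λ G] [Module.Finite Λ G]
    [AddCommGroup X] [Module Λ X] [Module.Finite Λ X] (hX : IsStatic Λ G X) :
    ∃ (n m : ℕ) (π : (Fin n → G) →ₗ[Λ] X) (u : (Fin m → G) →ₗ[Λ] (Fin n → G)),
      Function.Surjective π ∧ LinearMap.range u = LinearMap.ker π := by
  let : Module k G := Module.compHom G (algebraMap k Λ)
  let : Module k X := Module.compHom X (algebraMap k Λ)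
  have : IsScalarTower k Λ G := IsScalarTower.of_algebraMap_smul fun _ _ => rfl
  have : IsScalarTower k Λ X := IsScalarTower.of_algebraMap_smul fun _ _ => rfl
  have : Module.Finite k G := Module.Finite.trans Λ G
  have : Module.Finite k X := Module.Finite.trans Λ X
  obtain ⟨n, m, π, u, hπu, hlift, hker⟩ :=
    exists_exact_of_finiteDimensional k (Λ := Λ) (G := G) (X := X)
  exact ⟨n, m, π, u, exact_of_isStatic hX π u hπu hlift hker⟩

section ExactAbelianSub

variable {Λ : Type} [Ring Λ] {P : ModuleCat.{0} Λ → Prop} {G : ModuleCat.{0} Λ}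

lemma abSub_self {C : Type*} [Category C] [Abelian C] (M : C) : abSub M M :=
  fun _ _ hM => hM

lemma ProjIn.of_le {C : Type*} [Category C] [Abelian C] {P Q : C → Prop} {G : C}
    (hG : ProjIn P G) (hQP : Q ≤ P) (hQG : Q G) : ProjIn Q G :=
  ⟨hQG, fun X Y hX hY => hG.2 X Y (hQP X hX) (hQP Y hY)⟩

lemma IsExactAbelianSub.pi (hP : IsExactAbelianSub P) (hG : P G) :
    ∀ n : ℕ, P (ModuleCat.of Λ (Fin n → G))
  | 0 => hP.zero _ (ModuleCat.isZero_of_subsingleton _)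
  | n + 1 => hP.iso (ModuleCat.biprodIsoProd _ _ ≪≫ (Fin.consLinearEquiv Λ fun _ => G).toModuleIso)
      (hP.sum hG (hP.pi hG n))

lemma IsExactAbelianSub.of_exact (hP : IsExactAbelianSub P) (hG : P G) {X : ModuleCat.{0} Λ}
    {n m : ℕ} (π : (Fin n → G) →ₗ[Λ] X) (u : (Fin m → G) →ₗ[Λ] (Fin n → G))
    (hπ : Function.Surjective π) (hu : LinearMap.range u = LinearMap.ker π) : P X := by
  let u' := ModuleCat.ofHom (X := ModuleCat.of Λ (Fin m → G)) (Y := ModuleCat.of Λ (Fin n → G)) u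
  have e : ((Fin n → G) ⧸ LinearMap.range u) ≃ₗ[Λ] X :=
    (Submodule.quotEquivOfEq _ _ hu).trans (π.quotKerEquivOfSurjective hπ)
  exact hP.iso (ModuleCat.cokernelIsoRangeQuotient u' ≪≫ e.toModuleIso)
    (hP.coker u' (hP.pi hG m) (hP.pi hG n))

lemma exists_exact_of_progenerator (hP : IsExactAbelianSub P) (hG : ProjIn P G)
    (hgen : ∀ X : ModuleCat Λ, P X → ∃ (n : ℕ) (e : (⨁ (fun _ : Fin n => G)) ⟶ X), Epi e)
    {X : ModuleCat.{0} Λ} (hX : P X) :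
    ∃ (n m : ℕ) (π : (Fin n → G) →ₗ[Λ] X) (u : (Fin m → G) →ₗ[Λ] (Fin n → G)),
      Function.Surjective π ∧ LinearMap.range u = LinearMap.ker π ∧
      ∀ f : G →ₗ[Λ] X, ∃ a, π ∘ₗ a = f := by
  have epi_pi {Y : ModuleCat.{0} Λ} (hY : P Y) :
      ∃ (n : ℕ) (e : ModuleCat.of Λ (Fin n → G) ⟶ Y), Function.Surjective e := by
    obtain ⟨n, e, he⟩ := hgen Y hY
    exact ⟨n, (ModuleCat.biproductIsoPi _).inv ≫ e,
      (ModuleCat.epi_iff_surjective _).1 (epi_comp _ _)⟩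
  obtain ⟨n, π, hπ⟩ := epi_pi hX
  have hK : P (ModuleCat.of Λ (LinearMap.ker π.hom)) :=
    hP.iso (ModuleCat.kernelIsoKer π) (hP.ker π (hP.pi hG.1 n) hX)
  obtain ⟨m, w, hw⟩ := epi_pi hK
  refine ⟨n, m, π.hom, (LinearMap.ker π.hom).subtype ∘ₗ w.hom, hπ, ?_, fun f => ?_⟩
  · rw [LinearMap.range_comp, LinearMap.range_eq_top.2 hw, Submodule.map_subtype_top]
  · obtain ⟨a, ha⟩ := hG.2 _ X (hP.pi hG.1 n) hX π ((ModuleCat.epi_iff_surjective π).2 hπ)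
      (ModuleCat.ofHom f)
    exact ⟨a.hom, congrArg ModuleCat.Hom.hom ha⟩

end ExactAbelianSub

/-- Let `P` be an exact abelian subcategory of `mod Λ` and `G` a
progenerator of `P` (a projective object such that every object of `P` is an epimorphic
image of a finite direct sum of copies of `G`). Then `G` is ab-projective, `P = ab G`,
and `P = stat G`: the `G`-static modules are exactly the objects of `P`. -/
theorem progenerator_abProjective_stat_eq_ab
    (k : Type) [Field k] (Λ : Type) [Ring Λ] [Algebra k Λ] [FiniteDimensional k Λ]
    (P : ModuleCat Λ → Prop) (hP : IsExactAbelianSub P)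
    (hPfin : ∀ X : ModuleCat Λ, P X → Module.Finite Λ X)
    (G : ModuleCat Λ) (hG : ProjIn P G)
    (hgen : ∀ X : ModuleCat Λ, P X →
      ∃ (n : ℕ) (e : (⨁ (fun _ : Fin n => G)) ⟶ X), Epi e) :
    AbProjective G ∧
    (∀ X : ModuleCat Λ, P X ↔ abSub G X) ∧
    (∀ X : ModuleCat Λ, Module.Finite Λ X → (P X ↔ IsStatic Λ ↥G ↥X)) := by
  have hPab (X : ModuleCat Λ) (hX : abSub G X) : P X := hX P hP hG.1
  refine ⟨hG.of_le hPab (abSub_self G), fun X => ⟨fun hX => ?_, hPab X⟩,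
    fun X hX => ⟨fun hPX => ?_, fun hst => ?_⟩⟩
  · obtain ⟨n, m, π, u, hπ, hu, -⟩ := exists_exact_of_progenerator hP hG hgen hX
    exact fun Q hQ hQG => hQ.of_exact hQG π u hπ hu
  · obtain ⟨n, m, π, u, hπ, hu, hlift⟩ := exists_exact_of_progenerator hP hG hgen hPX
    exact isStatic_of_exact π hπ u hu hlift
  · have := hPfin G hG.1
    obtain ⟨n, m, π, u, hπ, hu⟩ := exists_exact_of_isStatic k hst
    exact hP.of_exact hG.1 π u hπ hu
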